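/- arXiv:2101.02189 — 3 statements merged into one kernel-verified Lean document; each statement's English description precedes it below -/
import Mathlib

section
/- Let E be a field of characteristic 0, V a nonzero finite-dimensional E-vector space, and n ≥ 1. The kernel of the group homomorphism Sym^n : GL(V) → GL(Sym^n V), sending A to the induced automorphism of the n-th symmetric power, consists exactly of the scalar automorphisms λ·id_V with λ^n = 1. -/
/-! Pairing `Sym^n A (xⁿ) = xⁿ` with the functional `fⁿ` gives `f (A x) ^ n = f x ^ n` for every
functional `f` and vector `x`. A functional vanishing on `x` but not on `A x` would contradict
this, so every vector is an eigenvector of `A`, whence `A = λ • id`; evaluating once more at a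
nonzero vector gives `λ ^ n = 1`. Conversely `Sym^n (λ • id) = λ ^ n • id`. -/

open scoped TensorProduct
open PiTensorProduct

variable (E : Type*) [Field E] (V : Type*) [AddCommGroup V] [Module E V] (n : ℕ)

/-- The submodule of relations defining the `n`-th symmetric power of `V` as a quotient of the
`n`-th tensor power: it is spanned by the differences of pure tensors of permuted families. -/
noncomputable def symRel : Submodule E (⨂[E] (i : Fin n), V) :=
  Submodule.span E {x | ∃ (v : Fin n → V) (σ : Equiv.Perm (Fin n)),
    x = PiTensorProduct.tprod E v - PiTensorProduct.tprod E (fun i => v (σ i))}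

/-- The `n`-th symmetric power `Sym^n V`, as a quotient of the `n`-th tensor power. -/
noncomputable abbrev SymPow := (⨂[E] (i : Fin n), V) ⧸ symRel E V n

/-- The endomorphism of `Sym^n V` functorially induced by an endomorphism of `V`. -/
noncomputable def symMap (f : V →ₗ[E] V) : SymPow E V n →ₗ[E] SymPow E V n :=
  Submodule.mapQ _ _ (PiTensorProduct.map fun _ => f) (by
    refine Submodule.span_le.2 ?_
    rintro x ⟨v, σ, rfl⟩
    refine Submodule.mem_comap.2 (Submodule.subset_span ?_)
    exact ⟨fun i => f (v i), σ, by simp [PiTensorProduct.map_tprod]⟩)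

section

variable {E V n}

noncomputable def symEval (f : V →ₗ[E] E) : SymPow E V n →ₗ[E] E :=
  Submodule.liftQ _
    (PiTensorProduct.lift ((MultilinearMap.mkPiAlgebra E (Fin n) E).compLinearMap fun _ => f))
    (by
      refine Submodule.span_le.2 ?_
      rintro x ⟨v, σ, rfl⟩
      simp [LinearMap.mem_ker, Equiv.prod_comp σ fun i => f (v i)])

theorem symEval_mk (f : V →ₗ[E] E) (v : Fin n → V) :
    symEval f (Submodule.Quotient.mk (tprod E v) : SymPow E V n) = ∏ i, f (v i) :=
  (Submodule.liftQ_apply _ _ _).trans (by simp)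

theorem symMap_mk (g : V →ₗ[E] V) (v : Fin n → V) :
    symMap E V n g (Submodule.Quotient.mk (tprod E v)) =
      Submodule.Quotient.mk (tprod E fun i => g (v i)) :=
  (Submodule.mapQ_apply _ _ _ _).trans (by simp [map_tprod])

theorem symMap_smul_id (c : E) :
    symMap E V n (c • LinearMap.id) = c ^ n • LinearMap.id := by
  refine Submodule.linearMap_qext _ (PiTensorProduct.ext (MultilinearMap.ext fun v => ?_))
  have hv : tprod E (fun i => c • v i) = c ^ n • tprod E v := by
    simpa [Finset.prod_const] using MultilinearMap.map_smul_univ (tprod E) (fun _ => c) v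
  simp only [LinearMap.compMultilinearMap_apply, LinearMap.comp_apply, Submodule.mkQ_apply,
    symMap_mk, LinearMap.smul_apply, LinearMap.id_apply, hv, Submodule.Quotient.mk_smul]

theorem pow_apply_eq_of_symMap_eq_id {g : V →ₗ[E] V} (h : symMap E V n g = LinearMap.id)
    (f : V →ₗ[E] E) (x : V) : f (g x) ^ n = f x ^ n := by
  have hx := congrArg (symEval f)
    (LinearMap.congr_fun h (Submodule.Quotient.mk (tprod E fun _ : Fin n => x)))
  simpa [symMap_mk, symEval_mk, Finset.prod_const] using hx

theorem not_linearIndependent_of_forall_pow_apply_eq (hn : n ≠ 0) {g : V →ₗ[E] V}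
    (h : ∀ (f : V →ₗ[E] E) x, f (g x) ^ n = f x ^ n) (x : V) :
    ¬ LinearIndependent E ![x, g x] := by
  intro hli
  have hgx : g x ∉ Submodule.span E {x} := by
    rw [Submodule.mem_span_singleton]
    exact fun ⟨a, ha⟩ => (LinearIndependent.pair_iff' (hli.ne_zero 0)).1 hli a ha
  obtain ⟨f, hfgx, hf⟩ := Submodule.exists_dual_map_eq_bot_of_notMem hgx inferInstance
  have hfx : f x = 0 := by
    simpa [hf] using Submodule.mem_map_of_mem (f := f) (Submodule.mem_span_singleton_self x)
  exact hfgx (pow_eq_zero_iff hn |>.1 (by rw [h, hfx, zero_pow hn]))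

theorem exists_pow_eq_one_of_forall_pow_apply_eq (hn : n ≠ 0) {g : V →ₗ[E] V}
    (h : ∀ (f : V →ₗ[E] E) x, f (g x) ^ n = f x ^ n) :
    ∃ c : E, c ^ n = 1 ∧ g = c • LinearMap.id := by
  rcases subsingleton_or_nontrivial V with hV | hV
  · exact ⟨1, one_pow n, Subsingleton.elim _ _⟩
  obtain ⟨c, rfl⟩ := LinearMap.exists_eq_smul_id_of_forall_notLinearIndependent
    (not_linearIndependent_of_forall_pow_apply_eq hn h)
  obtain ⟨x, hx⟩ := exists_ne (0 : V)
  obtain ⟨f, hfx⟩ := Module.Projective.exists_dual_eq_one E hx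
  refine ⟨c, ?_, rfl⟩
  simpa [hfx] using h f x

end

theorem statement2 (hn : 1 ≤ n)
    (A : V ≃ₗ[E] V) :
    symMap E V n A.toLinearMap = LinearMap.id ↔
      ∃ lam : E, lam ^ n = 1 ∧ A.toLinearMap = (lam • LinearMap.id : V →ₗ[E] V) := by
  refine ⟨fun h => exists_pow_eq_one_of_forall_pow_apply_eq (by omega)
    (pow_apply_eq_of_symMap_eq_id h), ?_⟩
  rintro ⟨lam, hlam, hA⟩
  rw [hA, symMap_smul_id, hlam, one_smul]
end

section
/- Let F be a field of characteristic 0, n ≥ 1, and A ∈ GL_2(F). Consider the induced automorphism Sym^n(A) of the (n+1)-dimensional space Sym^n(F²), written as a matrix in the basis (e₁^n, e₁^{n-1}e₂, …, e₂^n) where (e₁, e₂) is the standard basis of F². If the matrix of Sym^n(A) is upper triangular, then A is upper triangular. -/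
open Polynomial

theorem Polynomial.coeff_C_add_C_mul_X_pow_self {R : Type*} [CommSemiring R] (a c : R) (n : ℕ) :
    ((C a + C c * X) ^ n).coeff n = c ^ n := by
  have hdeg : (C a + C c * X).natDegree ≤ 1 :=
    natDegree_add_le_of_degree_le (by simp) ((natDegree_C_mul_le _ _).trans natDegree_X_le)
  simpa using coeff_pow_of_natDegree_le hdeg (m := n)

/-- The `(j,i)` entry of `Sym^n A` in the monomial basis is the coefficient of `Y^j` in
`(A₀₀ + A₁₀ Y)^{n-i} (A₀₁ + A₁₁ Y)^i`. -/
theorem statement7_general {F : Type*} [Field F] {n : ℕ} (hn : 1 ≤ n)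
    (A : Matrix (Fin 2) (Fin 2) F)
    (htri : ∀ i j : Fin (n + 1), (i : ℕ) < (j : ℕ) →
      (((C (A 0 0) + C (A 1 0) * X) ^ (n - (i : ℕ)) *
        (C (A 0 1) + C (A 1 1) * X) ^ (i : ℕ) : F[X])).coeff (j : ℕ) = 0) :
    A 1 0 = 0 := by
  -- the corner entry `(n, 0)` of `Sym^n A` is `A₁₀ ^ n`
  have hcorner := htri 0 (Fin.last n) (by simp; omega)
  simp only [Fin.val_zero, Nat.sub_zero, pow_zero, mul_one, Fin.val_last,
    coeff_C_add_C_mul_X_pow_self] at hcorner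
  exact pow_eq_zero_iff (by omega) |>.mp hcorner

/-- If the matrix of `Sym^n A` in the monomial basis `(e₁^n, e₁^{n-1}e₂, …, e₂^n)` of
`Sym^n(F²)` is upper triangular, then `A` is upper triangular. The `(j,i)` entry of `Sym^n A`
is the coefficient of `Y^j` in `(A₀₀ + A₁₀ Y)^{n-i} (A₀₁ + A₁₁ Y)^i`. -/
theorem statement7 {F : Type*} [Field F] [CharZero F] {n : ℕ} (hn : 1 ≤ n)
    (A : Matrix (Fin 2) (Fin 2) F) (hA : IsUnit A.det)
    (htri : ∀ i j : Fin (n + 1), (i : ℕ) < (j : ℕ) →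
      (((C (A 0 0) + C (A 1 0) * X) ^ (n - (i : ℕ)) *
        (C (A 0 1) + C (A 1 1) * X) ^ (i : ℕ) : F[X])).coeff (j : ℕ) = 0) :
    A 1 0 = 0 :=
  statement7_general hn A htri
end

section
/- (Noether–Deuring) Let G be a finite group (or a group, with finite-dimensional representations), E a field, F/E a field extension, and V, W finite-dimensional E-linear representations of G. If F ⊗_E V and F ⊗_E W are isomorphic as F-linear representations of G, then V and W are isomorphic as E-linear representations of G. -/
open scoped TensorProduct

universe u v

/-!
Write `Hom_G(X, Y)` for the space of intertwining maps. If `X` is finite-dimensional, base change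
turns an `E`-basis of `Hom_G(X, Y)` into an `F`-basis of `Hom_G(F ⊗ X, F ⊗ Y)`: the coordinates of
an `F`-linear intertwining map with respect to an `E`-basis of `F` are finitely many `E`-linear
maps, and they are intertwining because coordinates in `F ⊗ Y` are unique.

If `E` is infinite, pick a basis `fᵢ` of `Hom_G(V, W)`. The isomorphism over `F` is some
`∑ cᵢ fᵢ`, so the polynomial `det (∑ tᵢ fᵢ)` is nonzero; it therefore takes a nonzero value at a
point `a` of `Eⁿ`, and `∑ aᵢ fᵢ` is an isomorphism over `E`.

If `E` is finite, the dimension count gives `|Hom_G(X, V)| = |Hom_G(X, W)|` for every `X`.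
Sorting intertwining maps by their kernel `K` and factoring them through `X ⧸ K` expresses
`|Hom_G(X, Y)|` through the numbers of injective intertwining maps out of the quotients of `X`,
so by induction on `dim X` these numbers agree for `V` and `W`. For `X = V` there is an injective
intertwining map `V → V`, hence one `V → W`, which is bijective as `dim V = dim W`.
-/

theorem LinearMap.exists_finset_support_subset {R M N κ : Type*} [Semiring R] [AddCommMonoid M]
    [Module R M] [AddCommMonoid N] [Module R N] [Module.Finite R M] (ψ : M →ₗ[R] κ →₀ N) :
    ∃ s : Finset κ, ∀ x, (ψ x).support ⊆ s := by
  classical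
  obtain ⟨t, ht⟩ := Module.Finite.fg_top (R := R) (M := M)
  refine ⟨t.biUnion fun y => (ψ y).support, fun x => ?_⟩
  induction (ht ▸ Submodule.mem_top : x ∈ Submodule.span R t) using Submodule.span_induction with
  | mem y hy => exact Finset.subset_biUnion_of_mem (fun y => (ψ y).support) hy
  | zero => simp
  | add y z _ _ hy hz =>
    rw [map_add]
    exact Finsupp.support_add.trans (Finset.union_subset hy hz)
  | smul r y _ hy =>
    rw [map_smul]
    exact Finsupp.support_smul.trans hy

theorem TensorProduct.equivFinsuppOfBasisLeft_lTensor_apply {R M N P ι : Type*} [CommSemiring R]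
    [AddCommMonoid M] [Module R M] [AddCommMonoid N] [Module R N] [AddCommMonoid P] [Module R P]
    [DecidableEq ι] (b : Module.Basis ι R M) (f : N →ₗ[R] P) (t : M ⊗[R] N) (i : ι) :
    equivFinsuppOfBasisLeft b (f.lTensor M t) i = f (equivFinsuppOfBasisLeft b t i) := by
  induction t with
  | zero => simp
  | add x y hx hy => simp [hx, hy]
  | tmul m n => simp

theorem MvPolynomial.aeval_det_sum_X_smul {R K ι n : Type*} [CommRing R] [CommRing K]
    [Algebra R K] [Fintype ι] [Fintype n] [DecidableEq n] (A : ι → Matrix n n R) (x : ι → K) :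
    aeval x (∑ i, (X i : MvPolynomial ι R) • (A i).map C).det =
      (∑ i, x i • (A i).map (algebraMap R K)).det := by
  rw [AlgHom.map_det]
  congr 1
  ext j k
  simp [Matrix.sum_apply]

theorem LinearMap.exists_bijective_sum_smul_of_baseChange {E F V W ι : Type*} [Field E]
    [Infinite E] [Field F] [Algebra E F] [AddCommGroup V] [Module E V] [AddCommGroup W]
    [Module E W] [FiniteDimensional E V] [FiniteDimensional E W] [Fintype ι]
    (f : ι → V →ₗ[E] W) (c : ι → F)
    (hc : Function.Bijective (∑ i, c i • (f i).baseChange F : F ⊗[E] V →ₗ[F] F ⊗[E] W)) :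
    ∃ a : ι → E, Function.Bijective (∑ i, a i • f i : V →ₗ[E] W) := by
  classical
  let e := LinearEquiv.ofBijective _ hc
  have hdim : Module.finrank E V = Module.finrank E W := by
    simpa using e.finrank_eq
  let bV := Module.finBasis E V
  let bW := Module.finBasisOfFinrankEq E W hdim.symm
  let A i := LinearMap.toMatrix bV bW (f i)
  have hF : (∑ i, c i • (A i).map (algebraMap E F)).det ≠ 0 := by
    have := LinearEquiv.isUnit_det e (Algebra.TensorProduct.basis F bV)
      (Algebra.TensorProduct.basis F bW)
    have he : (e : F ⊗[E] V →ₗ[F] F ⊗[E] W) = ∑ i, c i • (f i).baseChange F :=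
      LinearMap.ext fun _ => rfl
    rw [he, map_sum] at this
    simpa [A, LinearMap.toMatrix_baseChange] using this.ne_zero
  have hP : (∑ i, (MvPolynomial.X i : MvPolynomial ι E) • (A i).map MvPolynomial.C).det ≠ 0 :=
    fun h => hF (by rw [← MvPolynomial.aeval_det_sum_X_smul, h, map_zero])
  obtain ⟨a, ha⟩ : ∃ a : ι → E, MvPolynomial.aeval a
      (∑ i, (MvPolynomial.X i : MvPolynomial ι E) • (A i).map MvPolynomial.C).det ≠ 0 :=
    not_forall.mp fun h =>
      hP (MvPolynomial.funext fun a => by rw [map_zero, ← MvPolynomial.aeval_eq_eval, h a])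
  rw [MvPolynomial.aeval_det_sum_X_smul] at ha
  have hdet : IsUnit (LinearMap.toMatrix bV bW (∑ i, a i • f i)).det := by
    simpa [A] using ha
  exact ⟨a, (LinearEquiv.ofIsUnitDet hdet).bijective⟩

theorem Submodule.finrank_quotient_lt {K V : Type*} [DivisionRing K] [AddCommGroup V] [Module K V]
    [FiniteDimensional K V] {N : Submodule K V} (hN : N ≠ ⊥) :
    Module.finrank K (V ⧸ N) < Module.finrank K V := by
  have := N.finrank_quotient_add_finrank
  have := Submodule.finrank_eq_zero.not.mpr hN
  omega

namespace Subrepresentation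

variable {A G V : Type*}

instance finite [Semiring A] [Monoid G] [AddCommMonoid V] [Module A V]
    {ρ : Representation A G V} [Finite V] : Finite (Subrepresentation ρ) :=
  Finite.of_injective _ SetLike.coe_injective

variable [Ring A] [Monoid G] [AddCommGroup V] [Module A V] {ρ : Representation A G V}

def quotient (K : Subrepresentation ρ) : Representation A G (V ⧸ K.toSubmodule) :=
  ρ.quotient K.toSubmodule fun g _ hv => K.apply_mem_toSubmodule g hv

@[simp]
theorem quotient_apply_mk (K : Subrepresentation ρ) (g : G) (v : V) :
    K.quotient g (Submodule.Quotient.mk v) = Submodule.Quotient.mk (ρ g v) := rfl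

end Subrepresentation

namespace Representation

section CommRing

variable {A G V W : Type*} [CommRing A] [Monoid G] [AddCommGroup V] [Module A V]
  [AddCommGroup W] [Module A W] {ρ : Representation A G V} {σ : Representation A G W}

theorem IntertwiningMap.ker_eq_bot_iff (f : IntertwiningMap ρ σ) :
    f.ker = ⊥ ↔ Function.Injective f := by
  rw [← f.coe_toLinearMap, ← LinearMap.ker_eq_bot, ← IntertwiningMap.ker_toSubmodule]
  exact Subrepresentation.toSubmodule_injective.eq_iff.symm

def IntertwiningMap.kerEquivInjective (K : Subrepresentation ρ) :
    {f : IntertwiningMap ρ σ // f.ker = K} ≃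
      {f : IntertwiningMap K.quotient σ // Function.Injective f} where
  toFun f :=
    have hK : K.toSubmodule = LinearMap.ker f.1.toLinearMap :=
      (congrArg Subrepresentation.toSubmodule f.2).symm
    ⟨(K.toSubmodule.liftQ f.1.toLinearMap hK.le).intertwiningMap_of_isIntertwiningMap _ _
      fun g v => by
        induction v using Submodule.Quotient.induction_on
        simp [f.1.isIntertwining],
      LinearMap.ker_eq_bot.mp (Submodule.ker_liftQ_eq_bot _ _ _ hK.ge)⟩
  invFun f := ⟨(f.1.toLinearMap ∘ₗ K.toSubmodule.mkQ).intertwiningMap_of_isIntertwiningMap _ _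
      fun g v => by simp [← f.1.isIntertwining], by
    ext v
    exact (map_eq_zero_iff f.1 f.2).trans (Submodule.Quotient.mk_eq_zero _)⟩
  left_inv f := by ext; rfl
  right_inv f := by ext; rfl

theorem card_intertwiningMap_eq_card_injective_add [Fintype (Subrepresentation ρ)]
    [DecidableEq (Subrepresentation ρ)] [Finite (IntertwiningMap ρ σ)] :
    Nat.card (IntertwiningMap ρ σ) = Nat.card {f : IntertwiningMap ρ σ // Function.Injective f} +
      ∑ K ∈ Finset.univ.erase (⊥ : Subrepresentation ρ),
        Nat.card {f : IntertwiningMap K.quotient σ // Function.Injective f} := by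
  calc Nat.card (IntertwiningMap ρ σ)
      = ∑ K, Nat.card {f : IntertwiningMap ρ σ // f.ker = K} := by
        rw [← Nat.card_sigma, Nat.card_congr (Equiv.sigmaFiberEquiv _)]
    _ = _ := by
        rw [← Finset.add_sum_erase _ _ (Finset.mem_univ ⊥)]
        congr 1
        · exact Nat.card_congr (Equiv.subtypeEquivRight fun f => f.ker_eq_bot_iff)
        · exact Finset.sum_congr rfl fun K _ => Nat.card_congr (IntertwiningMap.kerEquivInjective K)

def Equiv.intertwiningMapCongr {U : Type*} [AddCommGroup U] [Module A U]
    {τ : Representation A G U} (e : Equiv σ τ) :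
    IntertwiningMap ρ σ ≃ₗ[A] IntertwiningMap ρ τ :=
  LinearEquiv.ofLinearMap (IntertwiningMap.llcomp ρ σ τ e.toIntertwiningMap)
    (IntertwiningMap.llcomp ρ τ σ e.symm.toIntertwiningMap)
    (by ext; simp [IntertwiningMap.llcomp]) (by ext; simp [IntertwiningMap.llcomp])

end CommRing

section FiniteField

variable {E G : Type*} [Field E] [Finite E] [Monoid G] {V : Type u} {W : Type*}
  [AddCommGroup V] [Module E V] [AddCommGroup W] [Module E W]
  [FiniteDimensional E V] [FiniteDimensional E W] {ρ : Representation E G V}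
  {σ : Representation E G W}

theorem card_injective_intertwiningMap_eq
    (h : ∀ (X : Type v) [AddCommGroup X] [Module E X] [FiniteDimensional E X]
      (ξ : Representation E G X), Nat.card (IntertwiningMap ξ ρ) = Nat.card (IntertwiningMap ξ σ))
    {X : Type v} [AddCommGroup X] [Module E X] [FiniteDimensional E X]
    (ξ : Representation E G X) :
    Nat.card {f : IntertwiningMap ξ ρ // Function.Injective f} =
      Nat.card {f : IntertwiningMap ξ σ // Function.Injective f} := by
  induction hn : Module.finrank E X using Nat.strong_induction_on generalizing X with
  | _ n ih =>
  classical
  have : Finite X := Module.finite_of_finite E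
  have : Finite (IntertwiningMap ξ ρ) := Module.finite_of_finite E
  have : Finite (IntertwiningMap ξ σ) := Module.finite_of_finite E
  have := Fintype.ofFinite (Subrepresentation ξ)
  have hquotient (K : Subrepresentation ξ) (hK : K ∈ Finset.univ.erase ⊥) :
      Nat.card {f : IntertwiningMap K.quotient ρ // Function.Injective f} =
        Nat.card {f : IntertwiningMap K.quotient σ // Function.Injective f} :=
    ih _ (hn ▸ Submodule.finrank_quotient_lt fun h0 =>
      Finset.ne_of_mem_erase hK (Subrepresentation.toSubmodule_injective h0)) K.quotient rfl
  have hsum := h X ξ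
  rw [card_intertwiningMap_eq_card_injective_add, card_intertwiningMap_eq_card_injective_add,
    Finset.sum_congr rfl hquotient] at hsum
  omega

theorem nonempty_equiv_of_card_intertwiningMap_eq
    (hdim : Module.finrank E V = Module.finrank E W)
    (h : ∀ (X : Type u) [AddCommGroup X] [Module E X] [FiniteDimensional E X]
      (ξ : Representation E G X), Nat.card (IntertwiningMap ξ ρ) = Nat.card (IntertwiningMap ξ σ)) :
    Nonempty (Equiv ρ σ) := by
  have : Finite (IntertwiningMap ρ ρ) := Module.finite_of_finite E
  have hid : 0 < Nat.card {f : IntertwiningMap ρ ρ // Function.Injective f} :=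
    Nat.card_pos_iff.mpr ⟨⟨⟨IntertwiningMap.id ρ, Function.injective_id⟩⟩, inferInstance⟩
  rw [card_injective_intertwiningMap_eq h ρ] at hid
  obtain ⟨⟨f, hf⟩⟩ := (Nat.card_pos_iff.mp hid).1
  exact ⟨f.ofBijective ⟨hf, (LinearMap.injective_iff_surjective_of_finrank_eq_finrank hdim
    (f := f.toLinearMap)).mp hf⟩⟩

end FiniteField

section BaseChange

variable {E F G : Type*} [Field E] [Field F] [Algebra E F] [Monoid G] {V : Type u} {W : Type*}
  [AddCommGroup V] [Module E V] [AddCommGroup W] [Module E W]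

variable (F) in
@[simps]
noncomputable def baseChange (ρ : Representation E G V) : Representation F G (F ⊗[E] V) where
  toFun g := (ρ g).baseChange F
  map_one' := by simp [LinearMap.baseChange_one]
  map_mul' g h := by simp [LinearMap.baseChange_mul]

variable {ρ : Representation E G V} {σ : Representation E G W}

variable (F) in
noncomputable def IntertwiningMap.baseChange (f : IntertwiningMap ρ σ) :
    IntertwiningMap (ρ.baseChange F) (σ.baseChange F) where
  toLinearMap := f.toLinearMap.baseChange F
  isIntertwining' g := by simp [← LinearMap.baseChange_comp, f.isIntertwining']

theorem IntertwiningMap.toLinearMap_mem_span_baseChange [Module.Finite E V]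
    (φ : IntertwiningMap (ρ.baseChange F) (σ.baseChange F)) :
    φ.toLinearMap ∈ Submodule.span F
      (Set.range fun f : IntertwiningMap ρ σ => f.toLinearMap.baseChange F) := by
  classical
  let b := Module.Free.chooseBasis E F
  let coord := TensorProduct.equivFinsuppOfBasisLeft b (N := W)
  let ψ : V →ₗ[E] _ := coord.toLinearMap ∘ₗ φ.toLinearMap.restrictScalars E ∘ₗ
    TensorProduct.mk E F V 1
  have hψ (g : G) (x : V) (k) : ψ (ρ g x) k = σ g (ψ x k) := by
    have := IntertwiningMap.isIntertwining (ρ.baseChange F) (σ.baseChange F) φ g (1 ⊗ₜ x)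
    simp only [baseChange_apply, LinearMap.baseChange_tmul] at this
    simp only [ψ, LinearMap.comp_apply, TensorProduct.mk_apply, LinearMap.restrictScalars_apply,
      LinearEquiv.coe_coe, IntertwiningMap.toLinearMap_apply, this, LinearMap.baseChange_eq_ltensor,
      TensorProduct.equivFinsuppOfBasisLeft_lTensor_apply, coord]
  let h (k) : IntertwiningMap ρ σ :=
    (Finsupp.lapply k ∘ₗ ψ).intertwiningMap_of_isIntertwiningMap ρ σ fun g x => hψ g x k
  obtain ⟨s, hs⟩ := ψ.exists_finset_support_subset
  have hφ : φ.toLinearMap = ∑ k ∈ s, b k • (h k).toLinearMap.baseChange F := by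
    ext x
    apply coord.injective
    ext k
    change ψ x k = _
    simp only [TensorProduct.AlgebraTensorModule.curry_apply, TensorProduct.curry_apply,
      LinearMap.coe_restrictScalars, LinearMap.coe_sum, LinearMap.coe_smul, Finset.sum_apply,
      Pi.smul_apply, LinearMap.baseChange_tmul, IntertwiningMap.coe_toLinearMap,
      TensorProduct.smul_tmul', smul_eq_mul, mul_one, map_sum,
      TensorProduct.equivFinsuppOfBasisLeft_apply_tmul, Module.Basis.repr_self,
      Finsupp.mapRange_single, one_smul, Finsupp.coe_finsetSum, Finsupp.single_apply,
      Finset.sum_ite_eq', coord]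
    split_ifs with hk
    · rfl
    · exact Finsupp.notMem_support_iff.mp fun hk' => hk (hs x hk')
  rw [hφ]
  exact Submodule.sum_mem _ fun k _ => Submodule.smul_mem _ _ (Submodule.subset_span ⟨h k, rfl⟩)

theorem IntertwiningMap.toLinearMap_mem_span_baseChange_basis [Module.Finite E V] {ι : Type*}
    (B : Module.Basis ι E (IntertwiningMap ρ σ))
    (φ : IntertwiningMap (ρ.baseChange F) (σ.baseChange F)) :
    φ.toLinearMap ∈ Submodule.span F
      (Set.range fun i => (B i).toLinearMap.baseChange F) := by
  let P := LinearMap.baseChangeHom E F V W ∘ₗ IntertwiningMap.toLinearMapl ρ σ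
  have hP : Set.range P = Submodule.span E (Set.range (P ∘ B)) := by
    rw [← LinearMap.coe_range, LinearMap.range_eq_map, ← B.span_eq, Submodule.map_span,
      ← Set.range_comp]
  have := φ.toLinearMap_mem_span_baseChange
  rwa [show (Set.range fun f : IntertwiningMap ρ σ => f.toLinearMap.baseChange F) = Set.range P
    from rfl, hP, Submodule.span_span_of_tower] at this

theorem IntertwiningMap.linearIndependent_baseChange [Module.Finite E V] {ι : Type*}
    {f : ι → IntertwiningMap ρ σ} (hf : LinearIndependent E f) :
    LinearIndependent F fun i => (f i).baseChange F := by
  have := Module.finitePresentation_of_finite E V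
  have hΘ := Module.FinitePresentation.isBaseChange_map E V W F
  have hlin : LinearIndependent E fun i => (f i).toLinearMap :=
    hf.map' (IntertwiningMap.toLinearMapl ρ σ)
      (LinearMap.ker_eq_bot.mpr (IntertwiningMap.toLinearMap_injective ρ σ))
  have h1 : LinearIndependent F fun i => (1 : F) ⊗ₜ[E] (f i).toLinearMap :=
    Module.Flat.linearIndependent_one_tmul hlin
  have := h1.map_injOn hΘ.equiv.toLinearMap hΘ.equiv.injective.injOn
  refine LinearIndependent.of_comp (IntertwiningMap.toLinearMapl _ _) ?_
  convert this using 1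
  funext i
  simp [hΘ.equiv_tmul, IntertwiningMap.baseChange]

variable (F ρ σ) in
theorem finrank_intertwiningMap_baseChange [Module.Finite E V] :
    Module.finrank F (IntertwiningMap (ρ.baseChange F) (σ.baseChange F)) =
      Module.finrank E (IntertwiningMap ρ σ) := by
  let B := Module.Free.chooseBasis E (IntertwiningMap ρ σ)
  have hspan : ⊤ ≤ Submodule.span F (Set.range fun i => (B i).baseChange F) := by
    intro φ _
    have hφ := φ.toLinearMap_mem_span_baseChange_basis B
    rw [show (Set.range fun i => (B i).toLinearMap.baseChange F) =
      IntertwiningMap.toLinearMapl _ _ '' Set.range fun i => (B i).baseChange F by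
        rw [← Set.range_comp]; rfl, ← Submodule.map_span] at hφ
    obtain ⟨ψ, hψ, hψφ⟩ := hφ
    rwa [← IntertwiningMap.toLinearMap_injective _ _ hψφ]
  rw [Module.finrank_eq_nat_card_basis
      (Module.Basis.mk (IntertwiningMap.linearIndependent_baseChange B.linearIndependent) hspan),
    Module.finrank_eq_nat_card_basis B]

theorem card_intertwiningMap_eq_of_baseChange [Finite E] [FiniteDimensional E V]
    [FiniteDimensional E W] {U : Type*} [AddCommGroup U] [Module E U] [FiniteDimensional E U]
    (e : Equiv (ρ.baseChange F) (σ.baseChange F)) (ξ : Representation E G U) :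
    Nat.card (IntertwiningMap ξ ρ) = Nat.card (IntertwiningMap ξ σ) := by
  rw [Module.natCard_eq_pow_finrank (K := E) (V := IntertwiningMap ξ ρ),
    Module.natCard_eq_pow_finrank (K := E) (V := IntertwiningMap ξ σ),
    ← finrank_intertwiningMap_baseChange F ξ ρ, ← finrank_intertwiningMap_baseChange F ξ σ,
    e.intertwiningMapCongr.finrank_eq]

theorem nonempty_equiv_of_baseChange_of_infinite [Infinite E] [FiniteDimensional E V]
    [FiniteDimensional E W] (e : Equiv (ρ.baseChange F) (σ.baseChange F)) :
    Nonempty (Equiv ρ σ) := by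
  let B := Module.finBasis E (IntertwiningMap ρ σ)
  obtain ⟨c, hc⟩ := (Submodule.mem_span_range_iff_exists_fun F).mp
    (e.toIntertwiningMap.toLinearMap_mem_span_baseChange_basis B)
  obtain ⟨a, ha⟩ := LinearMap.exists_bijective_sum_smul_of_baseChange
    (fun i => (B i).toLinearMap) c (by rw [hc]; exact e.bijective)
  refine ⟨(∑ i, a i • B i).ofBijective ?_⟩
  convert ha using 1
  funext v
  simp [IntertwiningMap.sum_apply, IntertwiningMap.smul_apply]

theorem nonempty_equiv_of_baseChange [FiniteDimensional E V] [FiniteDimensional E W]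
    (e : Equiv (ρ.baseChange F) (σ.baseChange F)) : Nonempty (Equiv ρ σ) := by
  rcases finite_or_infinite E with hE | hE
  · have hdim : Module.finrank E V = Module.finrank E W := by
      simpa using e.toLinearEquiv.finrank_eq
    exact nonempty_equiv_of_card_intertwiningMap_eq hdim fun X _ _ _ ξ =>
      card_intertwiningMap_eq_of_baseChange e ξ
  · exact nonempty_equiv_of_baseChange_of_infinite e

end BaseChange

end Representation

/-- Noether–Deuring: if two finite-dimensional `E`-linear representations of `G` become
isomorphic after extending scalars to a field extension `F` of `E`, then they are already
isomorphic over `E`. -/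
theorem statement13 {E F : Type*} [Field E] [Field F] [Algebra E F]
    {G : Type*} [Group G]
    {V W : Type*} [AddCommGroup V] [Module E V] [AddCommGroup W] [Module E W]
    [FiniteDimensional E V] [FiniteDimensional E W]
    (ρ : Representation E G V) (τ : Representation E G W)
    (h : ∃ e : (F ⊗[E] V) ≃ₗ[F] (F ⊗[E] W),
      ∀ (g : G) (x : F ⊗[E] V), e ((ρ g).baseChange F x) = (τ g).baseChange F (e x)) :
    ∃ e : V ≃ₗ[E] W, ∀ (g : G) (v : V), e (ρ g v) = τ g (e v) := by
  obtain ⟨e, he⟩ := h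
  obtain ⟨φ⟩ := Representation.nonempty_equiv_of_baseChange
    (.mk e fun g => LinearMap.ext (he g) : (ρ.baseChange F).Equiv (τ.baseChange F))
  exact ⟨φ.toLinearEquiv, φ.toIntertwiningMap.isIntertwining⟩
end
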